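/- arXiv:2011.04176 — 7 statements merged into one kernel-verified Lean document; each statement's English description precedes it below -/
import Mathlib

section
/- If Z₁ and Z₂ are two Markov blankets of a target T (i.e., T is conditionally independent of all remaining variables given Z₁, and likewise given Z₂), and additionally T is conditionally independent of Z₁ \ Z₂ given Z₁ ∩ Z₂, then Z₁ ∩ Z₂ is also a Markov blanket of T. -/
open Set

/-- `Z` is a Markov blanket of `T` w.r.t. the conditional-independence relation `CI`. -/
def IsMarkovBlanket {V : Type*} (CI : Set V → Set V → Set V → Prop) (T : V) (Z : Set V) : Prop :=
  Z ⊆ Set.univ \ {T} ∧ CI {T} ((Set.univ \ Z) \ {T}) Z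

/-- A Markov boundary: an inclusion-minimal Markov blanket. -/
def IsMarkovBoundary {V : Type*} (CI : Set V → Set V → Set V → Prop) (T : V) (Z : Set V) : Prop :=
  IsMarkovBlanket CI T Z ∧ ∀ Z' ⊂ Z, ¬ IsMarkovBlanket CI T Z'

/-- `X` and `Y` contain equivalent information about `T` conditioned on `Z`. -/
def EquivInfo {V : Type*} (CI : Set V → Set V → Set V → Prop) (T : V) (X Y Z : Set V) : Prop :=
  ¬ CI {T} X Z ∧ ¬ CI {T} Y Z ∧ CI {T} X (Y ∪ Z) ∧ CI {T} Y (X ∪ Z)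

theorem Set.univ_diff_diff_union_diff_of_subset {V : Type*} {S W Z : Set V}
    (hWZ : W ⊆ Z) (hZS : Disjoint Z S) :
    (univ \ Z) \ S ∪ (Z \ W) = (univ \ W) \ S := by
  ext x
  by_cases hxZ : x ∈ Z
  · have hxS : x ∉ S := hZS.notMem_of_mem_left hxZ
    simp [hxZ, hxS]
  · have hxW : x ∉ W := fun hxW => hxZ (hWZ hxW)
    simp [hxZ, hxW]

/-- Contraction glues `T ⫫ Z \ W | W` to `T ⫫ (univ \ Z) \ {T} | W ∪ (Z \ W)`. -/
theorem IsMarkovBlanket.of_subset {V : Type*} {CI : Set V → Set V → Set V → Prop}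
    (contraction : ∀ A B C Z : Set V, CI A B (Z ∪ C) → CI A C Z → CI A (B ∪ C) Z)
    {T : V} {Z W : Set V} (hZ : IsMarkovBlanket CI T Z) (hWZ : W ⊆ Z)
    (hW : CI {T} (Z \ W) W) :
    IsMarkovBlanket CI T W := by
  obtain ⟨hZT, hZrest⟩ := hZ
  refine ⟨hWZ.trans hZT, ?_⟩
  have hZsplit : CI {T} ((univ \ Z) \ {T}) (W ∪ (Z \ W)) := by
    rwa [union_sdiff_cancel hWZ]
  have hZdisj : Disjoint Z {T} := subset_sdiff.mp hZT |>.2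
  rw [← univ_diff_diff_union_diff_of_subset hWZ hZdisj]
  exact contraction _ _ _ _ hZsplit hW

theorem intersection_is_blanket_of_CI_general {V : Type*}
    (CI : Set V → Set V → Set V → Prop)
    (contraction : ∀ A B C Z : Set V, CI A B (Z ∪ C) → CI A C Z → CI A (B ∪ C) Z)
    (T : V) (Z₁ Z₂ : Set V)
    (h₁ : IsMarkovBlanket CI T Z₁)
    (h : CI {T} (Z₁ \ Z₂) (Z₁ ∩ Z₂)) :
    IsMarkovBlanket CI T (Z₁ ∩ Z₂) :=
  h₁.of_subset contraction inter_subset_left (by rwa [sdiff_self_inter])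

theorem intersection_is_blanket_of_CI {V : Type*} [Fintype V]
    (CI : Set V → Set V → Set V → Prop)
(symm : ∀ A B C : Set V, CI A B C → CI B A C)
    (decomp : ∀ A B C Z : Set V, CI A (B ∪ C) Z → CI A B Z)
    (weakUnion : ∀ A B C Z : Set V, CI A (B ∪ C) Z → CI A B (Z ∪ C))
    (contraction : ∀ A B C Z : Set V, CI A B (Z ∪ C) → CI A C Z → CI A (B ∪ C) Z)
    (T : V) (Z₁ Z₂ : Set V)
    (h₁ : IsMarkovBlanket CI T Z₁) (h₂ : IsMarkovBlanket CI T Z₂)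
    (h : CI {T} (Z₁ \ Z₂) (Z₁ ∩ Z₂)) :
    IsMarkovBlanket CI T (Z₁ ∩ Z₂) :=
  intersection_is_blanket_of_CI_general CI contraction T Z₁ Z₂ h₁ h
end

section
/- If a target T has two distinct Markov boundaries MB₁ and MB₂ (Markov blankets minimal under inclusion), then MB₁ \ MB₂ and MB₂ \ MB₁ contain equivalent information about T conditioned on MB₁ ∩ MB₂; that is, T is dependent on MB₁ \ MB₂ given MB₁ ∩ MB₂, T is dependent on MB₂ \ MB₁ given MB₁ ∩ MB₂, T is independent of MB₂ \ MB₁ given MB₁, and T is independent of MB₁ \ MB₂ given MB₂. Consequently, if no pair of subsets contains equivalent information about T, the Markov boundary of T is unique. -/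
/-!
If `A` is a Markov blanket, decomposition shrinks its conditional independence statement to
`T ⫫ B \ A | A` for any `B` not containing `T`. On the other hand, if `T ⫫ A \ B | A ∩ B`, contraction
merges this with the blanket statement of `A` and makes `A ∩ B` a blanket; for two distinct Markov
boundaries `A ∩ B ⊂ A`, contradicting minimality.
-/

open Set

section MarkovBoundary

variable {V : Type*} {CI : Set V → Set V → Set V → Prop} {T : V} {A B : Set V}

theorem IsMarkovBlanket.ci_sdiff
    (decomp : ∀ A B C Z : Set V, CI A (B ∪ C) Z → CI A B Z)
    (hA : IsMarkovBlanket CI T A) (hB : B ⊆ univ \ {T}) : CI {T} (B \ A) A := by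
  have hsub : B \ A ⊆ (univ \ A) \ {T} := fun x hx => ⟨⟨trivial, hx.2⟩, (hB hx.1).2⟩
  have hci := hA.2
  rw [← union_sdiff_cancel hsub] at hci
  exact decomp _ _ _ _ hci

theorem IsMarkovBlanket.inter_of_ci
    (contraction : ∀ A B C Z : Set V, CI A B (Z ∪ C) → CI A C Z → CI A (B ∪ C) Z)
    (hA : IsMarkovBlanket CI T A) (h : CI {T} (A \ B) (A ∩ B)) :
    IsMarkovBlanket CI T (A ∩ B) := by
  have hci : CI {T} ((univ \ A) \ {T}) (A ∩ B ∪ A \ B) := by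
    rw [inter_union_sdiff]; exact hA.2
  have hrest : (univ \ A) \ {T} ∪ A \ B = (univ \ (A ∩ B)) \ {T} := by
    ext x
    have hT := @hA.1 x
    simp only [mem_union, mem_sdiff, mem_univ, true_and, mem_singleton_iff, mem_inter_iff] at hT ⊢
    tauto
  refine ⟨inter_subset_left.trans hA.1, ?_⟩
  rw [← hrest]
  exact contraction _ _ _ _ hci h

theorem IsMarkovBoundary.not_subset (hB : IsMarkovBoundary CI T B)
    (hA : IsMarkovBlanket CI T A) (hne : A ≠ B) : ¬ A ⊆ B :=
  fun hAB => hB.2 A (ssubset_iff_subset_ne.2 ⟨hAB, hne⟩) hA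

theorem IsMarkovBoundary.not_ci_sdiff_inter
    (contraction : ∀ A B C Z : Set V, CI A B (Z ∪ C) → CI A C Z → CI A (B ∪ C) Z)
    (hA : IsMarkovBoundary CI T A) (hB : IsMarkovBoundary CI T B) (hne : A ≠ B) :
    ¬ CI {T} (A \ B) (A ∩ B) := fun h =>
  hA.2 (A ∩ B) (inter_ssubset_left_iff.2 (hB.not_subset hA.1 hne))
    (hA.1.inter_of_ci contraction h)

theorem IsMarkovBoundary.equivInfo
    (decomp : ∀ A B C Z : Set V, CI A (B ∪ C) Z → CI A B Z)
    (contraction : ∀ A B C Z : Set V, CI A B (Z ∪ C) → CI A C Z → CI A (B ∪ C) Z)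
    (hA : IsMarkovBoundary CI T A) (hB : IsMarkovBoundary CI T B) (hne : A ≠ B) :
    EquivInfo CI T (A \ B) (B \ A) (A ∩ B) := by
  refine ⟨hA.not_ci_sdiff_inter contraction hB hne, ?_, ?_, ?_⟩
  · rw [inter_comm]; exact hB.not_ci_sdiff_inter contraction hA hne.symm
  · rw [inter_comm, sdiff_union_inter]; exact hB.1.ci_sdiff decomp hA.1.1
  · rw [sdiff_union_inter]; exact hA.1.ci_sdiff decomp hB.1.1

end MarkovBoundary

theorem multiple_boundaries_equiv_info_and_uniqueness_general {V : Type*}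
    (CI : Set V → Set V → Set V → Prop)
    (decomp : ∀ A B C Z : Set V, CI A (B ∪ C) Z → CI A B Z)
    (contraction : ∀ A B C Z : Set V, CI A B (Z ∪ C) → CI A C Z → CI A (B ∪ C) Z)
    (T : V) :
    (∀ MB₁ MB₂ : Set V, IsMarkovBoundary CI T MB₁ → IsMarkovBoundary CI T MB₂ →
        MB₁ ≠ MB₂ →
      ¬ CI {T} (MB₁ \ MB₂) (MB₁ ∩ MB₂) ∧
      ¬ CI {T} (MB₂ \ MB₁) (MB₁ ∩ MB₂) ∧
      CI {T} (MB₂ \ MB₁) MB₁ ∧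
      CI {T} (MB₁ \ MB₂) MB₂) ∧
    ((∀ X Y Z : Set V, ¬ EquivInfo CI T X Y Z) →
      ∀ MB₁ MB₂ : Set V, IsMarkovBoundary CI T MB₁ → IsMarkovBoundary CI T MB₂ →
        MB₁ = MB₂) := by
  refine ⟨fun MB₁ MB₂ h₁ h₂ hne => ?_, fun hnone MB₁ MB₂ h₁ h₂ => ?_⟩
  · obtain ⟨hdep₁, hdep₂, -, -⟩ := h₁.equivInfo decomp contraction h₂ hne
    exact ⟨hdep₁, hdep₂, h₁.1.ci_sdiff decomp h₂.1.1, h₂.1.ci_sdiff decomp h₁.1.1⟩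
  · by_contra hne
    exact hnone _ _ _ (h₁.equivInfo decomp contraction h₂ hne)

theorem multiple_boundaries_equiv_info_and_uniqueness {V : Type*} [Fintype V]
    (CI : Set V → Set V → Set V → Prop)
(symm : ∀ A B C : Set V, CI A B C → CI B A C)
    (decomp : ∀ A B C Z : Set V, CI A (B ∪ C) Z → CI A B Z)
    (weakUnion : ∀ A B C Z : Set V, CI A (B ∪ C) Z → CI A B (Z ∪ C))
    (contraction : ∀ A B C Z : Set V, CI A B (Z ∪ C) → CI A C Z → CI A (B ∪ C) Z)
    (T : V) :
    (∀ MB₁ MB₂ : Set V, IsMarkovBoundary CI T MB₁ → IsMarkovBoundary CI T MB₂ →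
        MB₁ ≠ MB₂ →
      ¬ CI {T} (MB₁ \ MB₂) (MB₁ ∩ MB₂) ∧
      ¬ CI {T} (MB₂ \ MB₁) (MB₁ ∩ MB₂) ∧
      CI {T} (MB₂ \ MB₁) MB₁ ∧
      CI {T} (MB₁ \ MB₂) MB₂) ∧
    ((∀ X Y Z : Set V, ¬ EquivInfo CI T X Y Z) →
      ∀ MB₁ MB₂ : Set V, IsMarkovBoundary CI T MB₁ → IsMarkovBoundary CI T MB₂ →
        MB₁ = MB₂) :=
  multiple_boundaries_equiv_info_and_uniqueness_general CI decomp contraction T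
end

section
/- Suppose T has two Markov boundaries MB₁ and MB₂. If T is conditionally independent of MB₁ \ MB₂ given MB₁ ∩ MB₂, then MB₁ ∩ MB₂ is a Markov blanket of T, contradicting minimality of MB₁; hence T is conditionally dependent on MB₁ \ MB₂ given MB₁ ∩ MB₂. -/
open Set

/-
Let `R = V \ MB₁ \ {T}`. If `T ⊥ MB₁ \ MB₂ | MB₁ ∩ MB₂`, contraction with the blanket property
`T ⊥ R | MB₁` gives `T ⊥ R ∪ (MB₁ \ MB₂) | MB₁ ∩ MB₂`, i.e. `MB₁ ∩ MB₂` is a Markov blanket. It is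
a proper subset of `MB₁` because distinct Markov boundaries cannot be nested, contradicting the
minimality of `MB₁`.
-/

theorem Set.sdiff_singleton_union_sdiff_of_subset {V : Type*} {T : V} {Z Z' : Set V}
    (hsub : Z' ⊆ Z) (hT : T ∉ Z) :
    (univ \ Z) \ {T} ∪ Z \ Z' = (univ \ Z') \ {T} := by
  ext x
  have := @hsub x
  grind

theorem IsMarkovBlanket.notMem {V : Type*} {CI : Set V → Set V → Set V → Prop} {T : V}
    {Z : Set V} (hZ : IsMarkovBlanket CI T Z) : T ∉ Z :=
  fun hT => (hZ.1 hT).2 rfl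

theorem IsMarkovBlanket.of_subset_of_indep {V : Type*} {CI : Set V → Set V → Set V → Prop}
    (contraction : ∀ A B C Z : Set V, CI A B (Z ∪ C) → CI A C Z → CI A (B ∪ C) Z)
    {T : V} {Z Z' : Set V} (hZ : IsMarkovBlanket CI T Z) (hsub : Z' ⊆ Z)
    (hci : CI {T} (Z \ Z') Z') : IsMarkovBlanket CI T Z' := by
  refine ⟨hsub.trans hZ.1, ?_⟩
  have hrest : CI {T} ((univ \ Z) \ {T}) (Z' ∪ Z \ Z') := by
    rw [union_sdiff_cancel hsub]; exact hZ.2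
  simpa only [sdiff_singleton_union_sdiff_of_subset hsub hZ.notMem] using
    contraction _ _ _ _ hrest hci

theorem IsMarkovBoundary.not_subset_of_ne {V : Type*} {CI : Set V → Set V → Set V → Prop}
    {T : V} {Z₁ Z₂ : Set V} (h₁ : IsMarkovBoundary CI T Z₁) (h₂ : IsMarkovBoundary CI T Z₂)
    (hne : Z₁ ≠ Z₂) : ¬ Z₁ ⊆ Z₂ :=
  fun hsub => h₂.2 Z₁ (hsub.ssubset_of_ne hne) h₁.1

theorem boundary_diff_dependent_general {V : Type*}
    (CI : Set V → Set V → Set V → Prop)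
    (contraction : ∀ A B C Z : Set V, CI A B (Z ∪ C) → CI A C Z → CI A (B ∪ C) Z)
    (T : V) (MB₁ MB₂ : Set V)
    (h₁ : IsMarkovBoundary CI T MB₁) (h₂ : IsMarkovBoundary CI T MB₂)
    (hne : MB₁ ≠ MB₂) :
    ¬ CI {T} (MB₁ \ MB₂) (MB₁ ∩ MB₂) := by
  intro hci
  have hssub : MB₁ ∩ MB₂ ⊂ MB₁ := inter_ssubset_left_iff.2 (h₁.not_subset_of_ne h₂ hne)
  have hblanket : IsMarkovBlanket CI T (MB₁ ∩ MB₂) :=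
    h₁.1.of_subset_of_indep contraction inter_subset_left (by rwa [sdiff_self_inter])
  exact h₁.2 _ hssub hblanket

theorem boundary_diff_dependent {V : Type*} [Fintype V]
    (CI : Set V → Set V → Set V → Prop)
(symm : ∀ A B C : Set V, CI A B C → CI B A C)
    (decomp : ∀ A B C Z : Set V, CI A (B ∪ C) Z → CI A B Z)
    (weakUnion : ∀ A B C Z : Set V, CI A (B ∪ C) Z → CI A B (Z ∪ C))
    (contraction : ∀ A B C Z : Set V, CI A B (Z ∪ C) → CI A C Z → CI A (B ∪ C) Z)
    (T : V) (MB₁ MB₂ : Set V)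
    (h₁ : IsMarkovBoundary CI T MB₁) (h₂ : IsMarkovBoundary CI T MB₂)
    (hne : MB₁ ≠ MB₂) :
    ¬ CI {T} (MB₁ \ MB₂) (MB₁ ∩ MB₂) :=
  boundary_diff_dependent_general CI contraction T MB₁ MB₂ h₁ h₂ hne
end

section
/- For a target T, if for all subsets X, Y, Z of the variable set not containing T, X and Y do not contain equivalent information about T conditioned on Z, then T has a unique Markov boundary. -/
open Set

/-!
For two Markov boundaries `M₁`, `M₂` put `X = M₁ \ M₂`, `Y = M₂ \ M₁`, `Z = M₁ ∩ M₂`. Decomposition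
applied to the blanket property of `M₂` (resp. `M₁`) gives `T ⊥ X | Y ∪ Z` and `T ⊥ Y | X ∪ Z`, so,
`X` and `Y` not carrying equivalent information, `T ⊥ X | Z` or `T ⊥ Y | Z`. Contraction with the
blanket property of `M₁` (resp. `M₂`) then makes `Z` a Markov blanket, and minimality of both
boundaries forces `M₁ = Z = M₂`.
-/

namespace IsMarkovBlanket

variable {V : Type*} {CI : Set V → Set V → Set V → Prop} {T : V} {Z M : Set V}

theorem notMem_s3 (h : IsMarkovBlanket CI T Z) : T ∉ Z :=
  fun hT => (h.1 hT).2 rfl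

theorem indep_of_subset (decomp : ∀ A B C Z : Set V, CI A (B ∪ C) Z → CI A B Z)
    (h : IsMarkovBlanket CI T Z) {X : Set V} (hX : X ⊆ (univ \ Z) \ {T}) : CI {T} X Z :=
  decomp _ X _ Z ((union_sdiff_cancel hX).symm ▸ h.2)

theorem indep_diff (decomp : ∀ A B C Z : Set V, CI A (B ∪ C) Z → CI A B Z)
    (hM : IsMarkovBlanket CI T M) (hZ : IsMarkovBlanket CI T Z) :
    CI {T} (M \ Z) (Z \ M ∪ M ∩ Z) := by
  rw [inter_comm, sdiff_union_inter]
  exact hZ.indep_of_subset decomp fun x hx =>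
    ⟨⟨trivial, hx.2⟩, fun hxT => hM.notMem_s3 (mem_singleton_iff.mp hxT ▸ hx.1)⟩

theorem of_subset_of_indep_s3
    (contraction : ∀ A B C Z : Set V, CI A B (Z ∪ C) → CI A C Z → CI A (B ∪ C) Z)
    (hM : IsMarkovBlanket CI T M) (hZM : Z ⊆ M) (hind : CI {T} (M \ Z) Z) :
    IsMarkovBlanket CI T Z := by
  refine ⟨hZM.trans hM.1, ?_⟩
  have hrest : (univ \ Z) \ {T} = (univ \ M) \ {T} ∪ M \ Z := by
    ext x
    have hxT : x ∈ M → x ≠ T := fun hx hxT => hM.notMem_s3 (hxT ▸ hx)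
    have hxM : x ∈ Z → x ∈ M := @hZM x
    simp only [mem_union, mem_sdiff, mem_univ, mem_singleton_iff, true_and]
    tauto
  rw [hrest]
  exact contraction {T} _ (M \ Z) Z ((union_sdiff_cancel hZM).symm ▸ hM.2) hind

end IsMarkovBlanket

theorem IsMarkovBoundary.eq_of_subset {V : Type*} {CI : Set V → Set V → Set V → Prop} {T : V}
    {Z M : Set V} (hM : IsMarkovBoundary CI T M) (hZ : IsMarkovBlanket CI T Z) (hZM : Z ⊆ M) :
    Z = M :=
  by_contra fun hne => hM.2 Z (ssubset_of_subset_of_ne hZM hne) hZ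

theorem unique_boundary_of_no_equiv_info_general {V : Type*}
    (CI : Set V → Set V → Set V → Prop)
    (decomp : ∀ A B C Z : Set V, CI A (B ∪ C) Z → CI A B Z)
    (contraction : ∀ A B C Z : Set V, CI A B (Z ∪ C) → CI A C Z → CI A (B ∪ C) Z)
    (T : V)
    (hNoEq : ∀ X Y Z : Set V, T ∉ X → T ∉ Y → T ∉ Z → ¬ EquivInfo CI T X Y Z) :
    ∀ MB₁ MB₂ : Set V, IsMarkovBoundary CI T MB₁ → IsMarkovBoundary CI T MB₂ →
      MB₁ = MB₂ := by
  intro M₁ M₂ h₁ h₂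
  have hX : CI {T} (M₁ \ M₂) (M₂ \ M₁ ∪ M₁ ∩ M₂) := h₁.1.indep_diff decomp h₂.1
  have hY : CI {T} (M₂ \ M₁) (M₁ \ M₂ ∪ M₁ ∩ M₂) :=
    inter_comm M₂ M₁ ▸ h₂.1.indep_diff decomp h₁.1
  have hT₁ : T ∉ M₁ := h₁.1.notMem_s3
  have hsplit : CI {T} (M₁ \ M₂) (M₁ ∩ M₂) ∨ CI {T} (M₂ \ M₁) (M₁ ∩ M₂) := by
    by_contra! h
    exact hNoEq _ _ _ (fun hT => hT₁ hT.1) (fun hT => h₂.1.notMem_s3 hT.1) (fun hT => hT₁ hT.1)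
      ⟨h.1, h.2, hX, hY⟩
  have hZ : IsMarkovBlanket CI T (M₁ ∩ M₂) := by
    rcases hsplit with hXZ | hYZ
    · exact h₁.1.of_subset_of_indep_s3 contraction inter_subset_left (by rwa [sdiff_self_inter])
    · exact h₂.1.of_subset_of_indep_s3 contraction inter_subset_right
        (by rwa [sdiff_inter_self_eq_sdiff])
  exact (h₁.eq_of_subset hZ inter_subset_left).symm.trans (h₂.eq_of_subset hZ inter_subset_right)

theorem unique_boundary_of_no_equiv_info {V : Type*} [Fintype V]
    (CI : Set V → Set V → Set V → Prop)
(symm : ∀ A B C : Set V, CI A B C → CI B A C)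
    (decomp : ∀ A B C Z : Set V, CI A (B ∪ C) Z → CI A B Z)
    (weakUnion : ∀ A B C Z : Set V, CI A (B ∪ C) Z → CI A B (Z ∪ C))
    (contraction : ∀ A B C Z : Set V, CI A B (Z ∪ C) → CI A C Z → CI A (B ∪ C) Z)
    (T : V)
    (hNoEq : ∀ X Y Z : Set V, T ∉ X → T ∉ Y → T ∉ Z → ¬ EquivInfo CI T X Y Z) :
    ∀ MB₁ MB₂ : Set V, IsMarkovBoundary CI T MB₁ → IsMarkovBoundary CI T MB₂ →
      MB₁ = MB₂ :=
  unique_boundary_of_no_equiv_info_general CI decomp contraction T hNoEq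
end

section
/- Let MB be a Markov boundary of T (in the mutual-information sense, i.e., I(T; U) = I(T; MB) and MB is inclusion-minimal with this property), let Z₀ ⊆ MB, and let Z be a set with I(T; (MB \ Z₀) ∪ Z) = I(T; MB) and such that no proper subset of Z satisfies this equation. Then every element X of Z belongs to some Markov boundary of T. (Equivalence direction of Definition 5 ⇒ Definition 4.) -/
/-!
The set `S = (MB \ Z₀) ∪ Z` is a blanket, so by finiteness it contains a minimal blanket `M`, i.e. a
Markov boundary. If some `X ∈ Z` were missing from `M`, then `M ⊆ (MB \ Z₀) ∪ (Z \ {X})`, and since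
mutual information is monotone (chain rule plus nonnegativity of conditional mutual information),
the latter set would already be a blanket, contradicting the minimality of `Z`.
-/

open Set

/-- `S` is a Markov blanket of the (implicit) target in the mutual-information sense:
the mutual information `mi S = I(T; S)` equals the total mutual information `I(T; U)`. -/
def IsBlanketMI {ι : Type*} (mi : Set ι → ℝ) (S : Set ι) : Prop :=
  mi S = mi Set.univ

/-- A Markov boundary: an inclusion-minimal Markov blanket (mutual-information sense). -/
def IsBoundaryMI {ι : Type*} (mi : Set ι → ℝ) (S : Set ι) : Prop :=
  IsBlanketMI mi S ∧ ∀ S' ⊂ S, ¬ IsBlanketMI mi S'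

section MarkovBlanket

variable {ι : Type*} {mi : Set ι → ℝ}

theorem monotone_of_chain_rule (cmi : Set ι → Set ι → ℝ)
    (chain : ∀ A B : Set ι, mi (A ∪ B) = mi B + cmi A B) (nonneg : ∀ A B : Set ι, 0 ≤ cmi A B) :
    Monotone mi := by
  intro B A hBA
  have hsplit := chain A B
  rw [union_eq_self_of_subset_right hBA] at hsplit
  linarith [nonneg A B]

theorem isBoundaryMI_iff_minimal {S : Set ι} : IsBoundaryMI mi S ↔ Minimal (IsBlanketMI mi) S :=
  Set.minimal_iff_forall_ssubset.symm

theorem IsBlanketMI.mono (hmono : Monotone mi) {S T : Set ι} (hS : IsBlanketMI mi S)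
    (hST : S ⊆ T) : IsBlanketMI mi T :=
  le_antisymm (hmono (subset_univ T)) (hS ▸ hmono hST)

theorem IsBlanketMI.exists_isBoundaryMI_subset [Finite ι] {S : Set ι} (hS : IsBlanketMI mi S) :
    ∃ M ⊆ S, IsBoundaryMI mi M := by
  obtain ⟨M, hMS, hM⟩ := exists_minimal_le_of_wellFoundedLT _ S hS
  exact ⟨M, hMS, isBoundaryMI_iff_minimal.2 hM⟩

theorem IsBlanketMI.subset_of_minimal_union (hmono : Monotone mi) {A Z M : Set ι}
    (hmin : ∀ Z' ⊂ Z, ¬ IsBlanketMI mi (A ∪ Z')) (hM : IsBlanketMI mi M) (hMAZ : M ⊆ A ∪ Z) :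
    Z ⊆ M := by
  intro X hX
  by_contra hXM
  have hM_sub : M ⊆ A ∪ (Z \ {X}) := fun y hy =>
    (hMAZ hy).imp_right fun hyZ => ⟨hyZ, fun hyX => hXM (hyX ▸ hy)⟩
  exact hmin _ (sdiff_singleton_ssubset.2 hX) (hM.mono hmono hM_sub)

end MarkovBlanket

theorem common_causal_def5_to_def4_general {ι : Type*} [Fintype ι]
    (mi : Set ι → ℝ) (cmi : Set ι → Set ι → ℝ)
    (chain : ∀ A B : Set ι, mi (A ∪ B) = mi B + cmi A B)
    (nonneg : ∀ A B : Set ι, 0 ≤ cmi A B)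
    (MB Z₀ Z : Set ι)
    (hMB : IsBoundaryMI mi MB)
    (hZ : mi ((MB \ Z₀) ∪ Z) = mi MB)
    (hmin : ∀ Z' ⊂ Z, mi ((MB \ Z₀) ∪ Z') ≠ mi MB) :
    ∀ X ∈ Z, ∃ M : Set ι, IsBoundaryMI mi M ∧ X ∈ M := by
  have hmono := monotone_of_chain_rule cmi chain nonneg
  have hblanket : IsBlanketMI mi ((MB \ Z₀) ∪ Z) := hZ.trans hMB.1
  obtain ⟨M, hMS, hM⟩ := hblanket.exists_isBoundaryMI_subset
  have hZM : Z ⊆ M := hM.1.subset_of_minimal_union hmono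
    (fun Z' hZ' hZ'b => hmin Z' hZ' (hZ'b.trans hMB.1.symm)) hMS
  exact fun X hX => ⟨M, hM, hZM hX⟩

theorem common_causal_def5_to_def4 {ι : Type*} [Fintype ι]
    (mi : Set ι → ℝ) (cmi : Set ι → Set ι → ℝ)
    (chain : ∀ A B : Set ι, mi (A ∪ B) = mi B + cmi A B)
    (nonneg : ∀ A B : Set ι, 0 ≤ cmi A B)
    (MB Z₀ Z : Set ι)
    (hMB : IsBoundaryMI mi MB) (hZ₀ : Z₀ ⊆ MB)
    (hZ : mi ((MB \ Z₀) ∪ Z) = mi MB)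
    (hmin : ∀ Z' ⊂ Z, mi ((MB \ Z₀) ∪ Z') ≠ mi MB) :
    ∀ X ∈ Z, ∃ M : Set ι, IsBoundaryMI mi M ∧ X ∈ M :=
  common_causal_def5_to_def4_general mi cmi chain nonneg MB Z₀ Z hMB hZ hmin
end

section
/- Let MBᵢ be a Markov blanket of Tᵢ and Zᵢ ⊆ MBᵢ. If Z ⊆ U satisfies: (a) I(Zᵢ; Tᵢ | (MBᵢ ∪ Z) \ Zᵢ) = 0 (Z renders Zᵢ redundant), and (b) I(Tᵢ; MBᵢ ∪ Z) = I(Tᵢ; MBᵢ) (which follows from Z ⊥ Tᵢ | MBᵢ), then I((MBᵢ \ Zᵢ) ∪ Z; Tᵢ) = I(MBᵢ; Tᵢ); i.e., replacing Zᵢ by Z in the Markov blanket loses no information about Tᵢ. -/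
open Set

section ChainRule

variable {ι : Type*} {mi : Set ι → ℝ} {cmi : Set ι → Set ι → ℝ}

theorem monotone_of_chain (chain : ∀ A B : Set ι, mi (A ∪ B) = mi B + cmi A B)
    (nonneg : ∀ A B : Set ι, 0 ≤ cmi A B) : Monotone mi := by
  intro B A hBA
  have h := chain A B
  rw [union_eq_self_of_subset_right hBA] at h
  linarith [nonneg A B]

theorem mi_diff_eq_of_cmi_eq_zero (chain : ∀ A B : Set ι, mi (A ∪ B) = mi B + cmi A B)
    {S Y : Set ι} (hYS : Y ⊆ S) (hY : cmi Y (S \ Y) = 0) : mi (S \ Y) = mi S := by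
  have h := chain Y (S \ Y)
  rw [union_sdiff_cancel hYS] at h
  linarith

end ChainRule

theorem replace_subset_keeps_information_general {ι : Type*}
    (mi : Set ι → ℝ) (cmi : Set ι → Set ι → ℝ)
    (chain : ∀ A B : Set ι, mi (A ∪ B) = mi B + cmi A B)
    (nonneg : ∀ A B : Set ι, 0 ≤ cmi A B)
    (MBi Zi Z : Set ι)
    (hZi : Zi ⊆ MBi)
    (ha : cmi Zi ((MBi ∪ Z) \ Zi) = 0)
    (hb : mi (MBi ∪ Z) = mi MBi) :
    mi ((MBi \ Zi) ∪ Z) = mi MBi := by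
  have hmono := monotone_of_chain chain nonneg
  -- `(MBi ∪ Z) \ Zi ⊆ (MBi \ Zi) ∪ Z ⊆ MBi ∪ Z`, and both ends carry the same information.
  have hlower : mi ((MBi ∪ Z) \ Zi) = mi (MBi ∪ Z) :=
    mi_diff_eq_of_cmi_eq_zero chain (hZi.trans subset_union_left) ha
  have hsub_lower : (MBi ∪ Z) \ Zi ⊆ (MBi \ Zi) ∪ Z := by
    rw [union_sdiff_distrib]
    exact union_subset_union_right _ sdiff_subset
  have hsub_upper : (MBi \ Zi) ∪ Z ⊆ MBi ∪ Z := union_subset_union_left _ sdiff_subset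
  rw [← hb]
  exact le_antisymm (hmono hsub_upper) (hlower ▸ hmono hsub_lower)

theorem replace_subset_keeps_information {ι : Type*} [Fintype ι]
    (mi : Set ι → ℝ) (cmi : Set ι → Set ι → ℝ)
    (chain : ∀ A B : Set ι, mi (A ∪ B) = mi B + cmi A B)
    (nonneg : ∀ A B : Set ι, 0 ≤ cmi A B)
    (MBi Zi Z : Set ι)
    (hblanket : ∀ A : Set ι, Disjoint A MBi → cmi A MBi = 0)
    (hZi : Zi ⊆ MBi)
    (ha : cmi Zi ((MBi ∪ Z) \ Zi) = 0)
    (hb : mi (MBi ∪ Z) = mi MBi) :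
    mi ((MBi \ Zi) ∪ Z) = mi MBi :=
  replace_subset_keeps_information_general mi cmi chain nonneg MBi Zi Z hZi ha hb
end

section
/- Minimal redundancy under intersection: assume the conditional-independence relation additionally satisfies the intersection property. Let M₁, M₂ be Markov boundaries of T₁, T₂ and S ⊆ (M₁ \ {T₂}) ∪ (M₂ \ {T₁}) be such that T₁ ⊥ (V \ S \ {T₁}) | S and T₂ ⊥ (V \ S \ {T₂}) | S. Then S = (M₁ \ {T₂}) ∪ (M₂ \ {T₁}); i.e., no proper subset of the constructed feature set is a joint Markov blanket of both labels. -/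
open Set

/-!
Under the intersection property the Markov blankets of a target are closed under intersection:
splitting `V \ {T}` into `Z₁ ∩ Z₂`, `Z₁ \ Z₂`, `Z₂ \ Z₁` and the rest, intersection removes the two
differences from the conditioning set and contraction then adds back the rest. Hence a Markov
boundary, being a minimal blanket, lies inside every blanket. A set `S` that is a blanket of both
`T₁` and `T₂` therefore contains `M₁` and `M₂`, so it cannot be a proper subset of their union.
-/

section

variable {V : Type*} {CI : Set V → Set V → Set V → Prop} {T : V} {Z : Set V}

theorem IsMarkovBlanket.notMem_s10 (h : IsMarkovBlanket CI T Z) : T ∉ Z :=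
  fun hT => (h.1 hT).2 rfl

theorem isMarkovBlanket_of_notMem (hT : T ∉ Z) (h : CI {T} ((univ \ Z) \ {T}) Z) :
    IsMarkovBlanket CI T Z :=
  ⟨subset_sdiff_singleton (subset_univ Z) hT, h⟩

theorem IsMarkovBlanket.inter
    (decomp : ∀ A B C Z : Set V, CI A (B ∪ C) Z → CI A B Z)
    (weakUnion : ∀ A B C Z : Set V, CI A (B ∪ C) Z → CI A B (Z ∪ C))
    (contraction : ∀ A B C Z : Set V, CI A B (Z ∪ C) → CI A C Z → CI A (B ∪ C) Z)
    (inter : ∀ A B C Z : Set V, CI A B (Z ∪ C) → CI A C (Z ∪ B) → CI A (B ∪ C) Z)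
    {Z₁ Z₂ : Set V} (h₁ : IsMarkovBlanket CI T Z₁) (h₂ : IsMarkovBlanket CI T Z₂) :
    IsMarkovBlanket CI T (Z₁ ∩ Z₂) := by
  have hT₁ := h₁.notMem_s10
  have hT₂ := h₂.notMem_s10
  set R := (univ \ (Z₁ ∪ Z₂)) \ {T}
  have hZ₁ : CI {T} (R ∪ (Z₂ \ Z₁)) ((Z₁ ∩ Z₂) ∪ (Z₁ \ Z₂)) := by
    convert h₁.2 using 2
    · ext v; by_cases v = T <;> simp_all [R]; tauto
    · exact inter_union_sdiff Z₁ Z₂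
  have hZ₂ : CI {T} ((Z₁ \ Z₂) ∪ R) ((Z₁ ∩ Z₂) ∪ (Z₂ \ Z₁)) := by
    convert h₂.2 using 2
    · ext v; by_cases v = T <;> simp_all [R]; tauto
    · rw [inter_comm, inter_union_sdiff]
  have hDiff : CI {T} ((Z₁ \ Z₂) ∪ (Z₂ \ Z₁)) (Z₁ ∩ Z₂) :=
    inter _ _ _ _ (decomp _ _ _ _ hZ₂) (decomp _ _ _ _ (by rwa [union_comm] at hZ₁))
  have hRest : CI {T} R ((Z₁ ∩ Z₂) ∪ ((Z₁ \ Z₂) ∪ (Z₂ \ Z₁))) := by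
    simpa only [union_assoc] using weakUnion _ _ _ _ hZ₁
  refine isMarkovBlanket_of_notMem (fun h => hT₁ h.1) ?_
  convert contraction _ _ _ _ hRest hDiff using 2
  ext v; by_cases v = T <;> simp_all [R]; tauto

theorem IsMarkovBoundary.subset_of_isMarkovBlanket
    (decomp : ∀ A B C Z : Set V, CI A (B ∪ C) Z → CI A B Z)
    (weakUnion : ∀ A B C Z : Set V, CI A (B ∪ C) Z → CI A B (Z ∪ C))
    (contraction : ∀ A B C Z : Set V, CI A B (Z ∪ C) → CI A C Z → CI A (B ∪ C) Z)
    (inter : ∀ A B C Z : Set V, CI A B (Z ∪ C) → CI A C (Z ∪ B) → CI A (B ∪ C) Z)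
    {M : Set V} (hM : IsMarkovBoundary CI T M) (hZ : IsMarkovBlanket CI T Z) : M ⊆ Z := by
  by_contra hMZ
  exact hM.2 (M ∩ Z) (inter_ssubset_left_iff.2 hMZ)
    (hM.1.inter decomp weakUnion contraction inter hZ)

end

theorem minimal_redundancy_under_intersection_general {V : Type*}
    (CI : Set V → Set V → Set V → Prop)
    (decomp : ∀ A B C Z : Set V, CI A (B ∪ C) Z → CI A B Z)
    (weakUnion : ∀ A B C Z : Set V, CI A (B ∪ C) Z → CI A B (Z ∪ C))
    (contraction : ∀ A B C Z : Set V, CI A B (Z ∪ C) → CI A C Z → CI A (B ∪ C) Z)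
(inter : ∀ A B C Z : Set V, CI A B (Z ∪ C) → CI A C (Z ∪ B) → CI A (B ∪ C) Z)
    (T₁ T₂ : V) (M₁ M₂ S : Set V)
    (hM₁ : IsMarkovBoundary CI T₁ M₁)
    (hM₂ : IsMarkovBoundary CI T₂ M₂)
    (hS : S ⊆ (M₁ \ {T₂}) ∪ (M₂ \ {T₁}))
    (hS₁ : CI {T₁} ((Set.univ \ S) \ {T₁}) S)
    (hS₂ : CI {T₂} ((Set.univ \ S) \ {T₂}) S) :
    S = (M₁ \ {T₂}) ∪ (M₂ \ {T₁}) := by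
  have hT₁ : T₁ ∉ S := fun h => (hS h).elim (fun h' => hM₁.1.notMem_s10 h'.1) (fun h' => h'.2 rfl)
  have hT₂ : T₂ ∉ S := fun h => (hS h).elim (fun h' => h'.2 rfl) (fun h' => hM₂.1.notMem_s10 h'.1)
  have hM₁S : M₁ ⊆ S := hM₁.subset_of_isMarkovBlanket decomp weakUnion contraction inter
    (isMarkovBlanket_of_notMem hT₁ hS₁)
  have hM₂S : M₂ ⊆ S := hM₂.subset_of_isMarkovBlanket decomp weakUnion contraction inter
    (isMarkovBlanket_of_notMem hT₂ hS₂)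
  exact hS.antisymm (union_subset (sdiff_subset.trans hM₁S) (sdiff_subset.trans hM₂S))

theorem minimal_redundancy_under_intersection {V : Type*} [Fintype V]
    (CI : Set V → Set V → Set V → Prop)
(symm : ∀ A B C : Set V, CI A B C → CI B A C)
    (decomp : ∀ A B C Z : Set V, CI A (B ∪ C) Z → CI A B Z)
    (weakUnion : ∀ A B C Z : Set V, CI A (B ∪ C) Z → CI A B (Z ∪ C))
    (contraction : ∀ A B C Z : Set V, CI A B (Z ∪ C) → CI A C Z → CI A (B ∪ C) Z)
(inter : ∀ A B C Z : Set V, CI A B (Z ∪ C) → CI A C (Z ∪ B) → CI A (B ∪ C) Z)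
    (T₁ T₂ : V) (M₁ M₂ S : Set V)
    (hM₁ : IsMarkovBoundary CI T₁ M₁)
    (hM₂ : IsMarkovBoundary CI T₂ M₂)
    (hS : S ⊆ (M₁ \ {T₂}) ∪ (M₂ \ {T₁}))
    (hS₁ : CI {T₁} ((Set.univ \ S) \ {T₁}) S)
    (hS₂ : CI {T₂} ((Set.univ \ S) \ {T₂}) S) :
    S = (M₁ \ {T₂}) ∪ (M₂ \ {T₁}) :=
  minimal_redundancy_under_intersection_general CI decomp weakUnion contraction inter T₁ T₂ M₁ M₂ S
    hM₁ hM₂ hS hS₁ hS₂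
end
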